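/- arXiv:math/0110025 — 3 statements merged into one kernel-verified Lean document; each statement's English description precedes it below -/
import Mathlib

section
/- Define m3(g, s, t) = (2/3)·(3²/12)^f · (1/(s!·t!)) · (6f+2s+2t−5)!/(f!·(3f+s+t−3)!) where f = (g+1−s−t)/3, valid when f is a nonnegative integer, g > 1, and the factorial arguments are nonnegative. Then the recursion 2(2g−3)·m3(g−1, t−1, s) = t·m3(g, s, t) holds for all valid parameters with t ≥ 1 and g−1 > 1 (with f unchanged, since (g−1)+1−(t−1)−s = g+1−s−t). -/
/-- `m3(g, s, t)` with `f = (g+1−s−t)/3` made explicit: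
`(2/3)·(3²/12)^f·(1/(s!·t!))·(6f+2s+2t−5)!/(f!·(3f+s+t−3)!)`. -/
def m3 (f s t : ℕ) : ℚ :=
  (2 / 3) * ((3 ^ 2 : ℚ) / 12) ^ f * (1 / (Nat.factorial s * Nat.factorial t)) *
    (Nat.factorial (6 * f + 2 * s + 2 * t - 5)) /
      (Nat.factorial f * Nat.factorial (3 * f + s + t - 3))

theorem order_three_mass_recursion (g s t f : ℕ)
    (hg : 1 < g - 1) (ht : 1 ≤ t)
    (hfac1 : 5 ≤ 6 * f + 2 * s + 2 * t) (hfac2 : 3 ≤ 3 * f + s + t)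
    (hfst : ((g : ℤ) + 1 - (s : ℤ) - (t : ℤ)) = 3 * (f : ℤ)) :
    2 * (2 * (g : ℚ) - 3) * m3 f (t - 1) s = (t : ℚ) * m3 f s t := by
  obtain ⟨a, rfl⟩ : ∃ a, t = a + 1 := ⟨t - 1, by omega⟩
  obtain ⟨b, hb⟩ : ∃ b, 3 * f + s + a = b + 3 := ⟨3 * f + s + a - 3, by omega⟩
  have hgq : (g : ℚ) = (b : ℚ) + 3 := by
    have : (g : ℤ) = (b : ℤ) + 3 := by omega
    exact_mod_cast this
  have e1 : 6 * f + 2 * s + 2 * (a + 1) - 5 = 2 * b + 3 := by omega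
  have e1' : 6 * f + 2 * a + 2 * s - 5 = 2 * b + 1 := by omega
  have e2 : 3 * f + s + (a + 1) - 3 = b + 1 := by omega
  have e2' : 3 * f + a + s - 3 = b := by omega
  have f3 : Nat.factorial (2 * b + 3)
      = (2 * b + 3) * ((2 * b + 2) * Nat.factorial (2 * b + 1)) := by
    rw [show 2 * b + 3 = 2 * b + 2 + 1 by ring, Nat.factorial_succ,
      show 2 * b + 2 = 2 * b + 1 + 1 by ring, Nat.factorial_succ]
  simp only [m3, Nat.add_sub_cancel, e1, e1', e2, e2', f3, Nat.factorial_succ]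
  have ha : (Nat.factorial a : ℚ) ≠ 0 := by exact_mod_cast (Nat.factorial_pos a).ne'
  have hs : (Nat.factorial s : ℚ) ≠ 0 := by exact_mod_cast (Nat.factorial_pos s).ne'
  have hf : (Nat.factorial f : ℚ) ≠ 0 := by exact_mod_cast (Nat.factorial_pos f).ne'
  have hbb : (Nat.factorial b : ℚ) ≠ 0 := by exact_mod_cast (Nat.factorial_pos b).ne'
  have h21 : (Nat.factorial (2 * b + 1) : ℚ) ≠ 0 := by
    exact_mod_cast (Nat.factorial_pos _).ne'
  rw [hgq]
  push_cast
  field_simp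
  ring
end

section
/- For every integer g ≥ 1, the quantity (12g−6)·m1(g) is a positive integer, where m1(g) = 2·(6g−5)!/(12^g·g!·(3g−3)!). -/
/-- The mass of oriented maximal Wicks forms of genus `g`. -/
def m1 (g : ℕ) : ℚ :=
  2 * (Nat.factorial (6 * g - 5)) / (12 ^ g * Nat.factorial g * Nat.factorial (3 * g - 3))

/-!
Splitting `1, …, 6k` by residue mod `6`, the even numbers contribute `2^(3k) (3k)!`, the odd
multiples of `3` contribute `3^k (2k-1)!!`, and the rest is `∏_{j<k} (6j+1)(6j+5)`. Since
`2^k k! (2k-1)!! = (2k)!`, this gives `(6k)! k! = 12^k (2k)! (3k)! ∏_{j<k} (6j+1)(6j+5)`, and then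
`(12g-6) m1 g = (6k+1) C(2k+1, k) ∏_{j<k} (6j+1)(6j+5)` for `g = k + 1`.
-/

open Finset Nat

def coprimeSixProd (k : ℕ) : ℕ := ∏ j ∈ range k, (6 * j + 1) * (6 * j + 5)

lemma coprimeSixProd_pos (k : ℕ) : 0 < coprimeSixProd k :=
  prod_pos fun _ _ => by positivity

lemma factorial_six_mul_mul_factorial (k : ℕ) :
    (6 * k)! * k ! = 12 ^ k * (2 * k)! * (3 * k)! * coprimeSixProd k := by
  induction k with
  | zero => simp [coprimeSixProd]
  | succ k ih =>
    rw [show 6 * (k + 1) = 6 * k + 5 + 1 by ring, show 2 * (k + 1) = 2 * k + 1 + 1 by ring,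
      show 3 * (k + 1) = 3 * k + 2 + 1 by ring]
    simp only [Nat.factorial_succ, coprimeSixProd, prod_range_succ] at ih ⊢
    linear_combination (72 * (k + 1) ^ 2 * (2 * k + 1) * (3 * k + 1) * (3 * k + 2) * (6 * k + 1) *
      (6 * k + 5)) * ih

lemma pointed_count_mul_eq (k : ℕ) :
    (12 * k + 6) * (2 * (6 * k + 1)!) =
      (6 * k + 1) * (2 * k + 1).choose k * coprimeSixProd k *
        (12 ^ (k + 1) * (k + 1)! * (3 * k)!) := by
  have hchoose : (2 * k + 1).choose k * k ! * (k + 1)! = (2 * k + 1)! := by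
    simpa [show 2 * k + 1 - k = k + 1 by omega] using
      Nat.choose_mul_factorial_mul_factorial (show k ≤ 2 * k + 1 by omega)
  apply Nat.eq_of_mul_eq_mul_right (factorial_pos k)
  simp only [Nat.factorial_succ] at hchoose ⊢
  linear_combination (12 * (2 * k + 1) * (6 * k + 1)) * factorial_six_mul_mul_factorial k
    - (12 * 12 ^ k * (6 * k + 1) * (3 * k)! * coprimeSixProd k) * hchoose

lemma pointed_count_eq (k : ℕ) :
    ((12 * k + 6 : ℕ) : ℚ) * m1 (k + 1) =
      ((6 * k + 1) * (2 * k + 1).choose k * coprimeSixProd k : ℕ) := by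
  rw [m1, show 6 * (k + 1) - 5 = 6 * k + 1 by omega, show 3 * (k + 1) - 3 = 3 * k by omega,
    mul_div_assoc', div_eq_iff (by positivity)]
  exact_mod_cast pointed_count_mul_eq k

theorem pointed_count_is_integer (g : ℕ) (hg : 1 ≤ g) :
    ∃ n : ℕ, 0 < n ∧ ((12 * g - 6 : ℕ) : ℚ) * m1 g = n := by
  obtain ⟨k, rfl⟩ : ∃ k, g = k + 1 := ⟨g - 1, by omega⟩
  rw [show 12 * (k + 1) - 6 = 12 * k + 6 by omega]
  refine ⟨_, ?_, pointed_count_eq k⟩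
  have := Nat.choose_pos (show k ≤ 2 * k + 1 by omega)
  have := coprimeSixProd_pos k
  positivity
end

section
/- For every integer g ≥ 1, the number 12^g · g! · (3g−3)! divides 2·(12g−6)·(6g−5)!. -/
open Nat

private lemma pv_fact_mul (p : ℕ) (hp : p.Prime) (n : ℕ) :
    padicValNat p ((p * n)!) = padicValNat p (n !) + n := by
  have : Fact p.Prime := ⟨hp⟩
  exact padicValNat_factorial_mul n

private lemma pv2_fact_le (n : ℕ) : padicValNat 2 (n !) ≤ n - 1 := by
  have inst : Fact (Nat.Prime 2) := ⟨by norm_num⟩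
  induction n using Nat.strong_induction_on with
  | _ n ih =>
    rcases Nat.eq_zero_or_pos n with h0 | h0
    · subst h0; simp [Nat.factorial]
    · have h1 : padicValNat 2 ((2 * (n / 2))!) = padicValNat 2 (n !) :=
        padicValNat_mul_div_factorial n
      have h2 : padicValNat 2 ((2 * (n / 2))!) = padicValNat 2 ((n / 2)!) + n / 2 :=
        padicValNat_factorial_mul (n / 2)
      have hlt : n / 2 < n := Nat.div_lt_self h0 one_lt_two
      have h3 := ih (n / 2) hlt
      have h4 : 2 * (n / 2) ≤ n := Nat.mul_div_le n 2
      rcases Nat.eq_zero_or_pos (n / 2) with hq | hq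
      · rw [← h1, h2, hq]
        simp [Nat.factorial]
      · omega

private lemma pv_choose (p : ℕ) (hp : p.Prime) (h : ℕ) :
    padicValNat p (h + 1) ≤ padicValNat p (2 * h + 1) + padicValNat p ((2 * h).choose h) := by
  have inst : Fact p.Prime := ⟨hp⟩
  have key : (2 * h + 1) * (2 * h).choose h = (2 * h + 1).choose (h + 1) * (h + 1) :=
    Nat.add_one_mul_choose_eq (2 * h) h
  have h1 : (2 * h).choose h ≠ 0 := (Nat.choose_pos (by omega)).ne'
  have h2 : (2 * h + 1).choose (h + 1) ≠ 0 := (Nat.choose_pos (by omega)).ne'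
  have hv := congrArg (padicValNat p) key
  rw [padicValNat.mul (by omega) h1, padicValNat.mul h2 (by omega)] at hv
  omega

private lemma pv_dvd_le (p a b : ℕ) (hp : p.Prime) (ha : a ≠ 0) (hb : b ≠ 0) (hd : a ∣ b) :
    padicValNat p a ≤ padicValNat p b := by
  have le := (Nat.factorization_le_iff_dvd ha hb).2 hd
  have := Finsupp.le_def.mp le p
  rwa [Nat.factorization_def _ hp, Nat.factorization_def _ hp] at this

theorem pointed_count_divisibility (g : ℕ) (hg : 1 ≤ g) :
    12 ^ g * Nat.factorial g * Nat.factorial (3 * g - 3) ∣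
      2 * (12 * g - 6) * Nat.factorial (6 * g - 5) := by
  obtain ⟨h, rfl⟩ : ∃ h, g = h + 1 := ⟨g - 1, by omega⟩
  have e1 : 3 * (h + 1) - 3 = 3 * h := by omega
  have e2 : 6 * (h + 1) - 5 = 6 * h + 1 := by omega
  have e3 : 2 * (12 * (h + 1) - 6) = 12 * (2 * h + 1) := by omega
  rw [e1, e2, e3]
  have e4 : 12 ^ (h + 1) * (h + 1)! * (3 * h)! = 12 * (12 ^ h * ((h + 1)! * (3 * h)!)) := by ring
  have e5 : 12 * (2 * h + 1) * (6 * h + 1)! = 12 * ((2 * h + 1) * (6 * h + 1)!) := by ring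
  rw [e4, e5]
  apply mul_dvd_mul_left
  have hD : (12 : ℕ) ^ h * ((h + 1)! * (3 * h)!) ≠ 0 := by positivity
  have hN : (2 * h + 1) * (6 * h + 1)! ≠ 0 := by positivity
  rw [← Nat.factorization_le_iff_dvd hD hN, Finsupp.le_def]
  intro p
  by_cases hp : p.Prime
  swap
  · simp [Nat.factorization_eq_zero_of_not_prime _ hp]
  have inst : Fact p.Prime := ⟨hp⟩
  rw [Nat.factorization_mul (by positivity) (by positivity),
    Nat.factorization_mul (by positivity) (by positivity),
    Nat.factorization_mul (by positivity) (by positivity),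
    Nat.factorization_pow]
  simp only [Finsupp.add_apply, Finsupp.smul_apply, smul_eq_mul]
  rw [Nat.factorization_def _ hp, Nat.factorization_def _ hp, Nat.factorization_def _ hp,
    Nat.factorization_def _ hp, Nat.factorization_def _ hp]
  -- goal: h * padicValNat p 12 + (v ((h+1)!) + v ((3h)!)) ≤ v (2h+1) + v ((6h+1)!)
  have hfs : padicValNat p ((6 * h + 1)!) = padicValNat p (6 * h + 1) + padicValNat p ((6 * h)!) := by
    rw [Nat.factorial_succ, padicValNat.mul (by omega) (Nat.factorial_ne_zero _)]
  rcases eq_or_ne p 2 with rfl | hp2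
  · -- p = 2
    have h12 : padicValNat 2 12 = 2 := by
      rw [show (12 : ℕ) = 2 ^ 2 * 3 by norm_num,
        padicValNat.mul (by norm_num) (by norm_num), padicValNat.prime_pow,
        padicValNat.eq_zero_of_not_dvd (by decide)]
    rw [h12]
    have hB : padicValNat 2 ((6 * h)!) = padicValNat 2 ((3 * h)!) + 3 * h := by
      rw [show 6 * h = 2 * (3 * h) by ring, pv_fact_mul 2 (by norm_num)]
    have hC : padicValNat 2 ((h + 1)!) ≤ h := by
      have := pv2_fact_le (h + 1); omega
    omega
  rcases eq_or_ne p 3 with rfl | hp3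
  · -- p = 3
    have h12 : padicValNat 3 12 = 1 := by
      rw [show (12 : ℕ) = 3 ^ 1 * 4 by norm_num,
        padicValNat.mul (by norm_num) (by norm_num), padicValNat.prime_pow,
        padicValNat.eq_zero_of_not_dvd (by decide)]
    rw [h12]
    have hB : padicValNat 3 ((6 * h)!) = padicValNat 3 ((2 * h)!) + 2 * h := by
      rw [show 6 * h = 3 * (2 * h) by ring, pv_fact_mul 3 (by norm_num)]
    have hC : padicValNat 3 ((3 * h)!) = padicValNat 3 (h !) + h :=
      pv_fact_mul 3 (by norm_num) h
    have hDe : padicValNat 3 ((h + 1)!) = padicValNat 3 (h + 1) + padicValNat 3 (h !) := by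
      rw [Nat.factorial_succ, padicValNat.mul (by omega) (Nat.factorial_ne_zero _)]
    have hE : padicValNat 3 ((2 * h)!) =
        padicValNat 3 ((2 * h).choose h) + padicValNat 3 (h !) + padicValNat 3 (h !) := by
      have key : (2 * h).choose h * h ! * h ! = (2 * h)! := by
        have := Nat.choose_mul_factorial_mul_factorial (show h ≤ 2 * h by omega)
        rwa [show 2 * h - h = h by omega] at this
      have hc0 : (2 * h).choose h ≠ 0 := (Nat.choose_pos (by omega)).ne'
      rw [← key, padicValNat.mul (mul_ne_zero hc0 (Nat.factorial_ne_zero _)) (Nat.factorial_ne_zero _),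
        padicValNat.mul hc0 (Nat.factorial_ne_zero _)]
    have hF := pv_choose 3 (by norm_num) h
    omega
  · -- p ≥ 5
    have h12 : padicValNat p 12 = 0 := by
      apply padicValNat.eq_zero_of_not_dvd
      intro hdvd
      have hle : p ≤ 12 := Nat.le_of_dvd (by norm_num) hdvd
      interval_cases p <;> revert hdvd <;> first | (exact absurd hp (by decide)) | omega | decide
    rw [h12]
    have hdvd : (h + 1)! * (3 * h)! ∣ (6 * h + 1)! :=
      dvd_trans (Nat.factorial_mul_factorial_dvd_factorial_add (h + 1) (3 * h))
        (Nat.factorial_dvd_factorial (by omega))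
    have hle := pv_dvd_le p ((h + 1)! * (3 * h)!) ((6 * h + 1)!) hp
      (by positivity) (Nat.factorial_ne_zero _) hdvd
    rw [padicValNat.mul (Nat.factorial_ne_zero _) (Nat.factorial_ne_zero _)] at hle
    omega
end
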